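/- arXiv:2209.13599 — 2 statements merged into one kernel-verified Lean document; each statement's English description precedes it below -/
import Mathlib

section
/- Derivation of a discrete integral with parameters: let G be an additive commutative group, f : ℤ → ℤ → G, and a, b : ℤ → ℤ. Define F(x) = ∫_{a(x)}^{b(x)} f(x,t) dt using the signed discrete integral. Then for every x, F(x+1) − F(x) = ∫_{a(x)}^{b(x)} (f(x+1,t) − f(x,t)) dt + ∫_{0}^{a(x) − a(x+1)} f(x+1, a(x+1)+t) dt + ∫_{0}^{b(x+1) − b(x)} f(x+1, b(x)+t) dt. -/
/-- Signed discrete integral: `∫_α^β g(t) dt = ∑_{t=α}^{β-1} g(t)` when `α ≤ β`,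
and `-∫_β^α g(t) dt` when `α > β`. -/
noncomputable def signedIntegral {G : Type*} [AddCommGroup G] (α β : ℤ) (g : ℤ → G) : G :=
  if α ≤ β then ∑ t ∈ Finset.Ico α β, g t else -∑ t ∈ Finset.Ico β α, g t

lemma sum_Ico_split {G : Type*} [AddCommGroup G] {α β γ : ℤ} (h1 : α ≤ β) (h2 : β ≤ γ)
    (g : ℤ → G) :
    ∑ t ∈ Finset.Ico α γ, g t = ∑ t ∈ Finset.Ico α β, g t + ∑ t ∈ Finset.Ico β γ, g t := by
  rw [← Finset.Ico_union_Ico_eq_Ico h1 h2,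
    Finset.sum_union (Finset.Ico_disjoint_Ico_consecutive α β γ)]

lemma signedIntegral_symm {G : Type*} [AddCommGroup G] (α β : ℤ) (g : ℤ → G) :
    signedIntegral β α g = -signedIntegral α β g := by
  unfold signedIntegral
  rcases lt_trichotomy α β with h | h | h
  · rw [if_neg (not_le.2 h), if_pos h.le]
  · subst h; simp
  · rw [if_pos h.le, if_neg (not_le.2 h), neg_neg]

lemma signedIntegral_eq_sub_aux {G : Type*} [AddCommGroup G] {α β : ℤ} (h : α ≤ β) (g : ℤ → G) :
    signedIntegral α β g = signedIntegral 0 β g - signedIntegral 0 α g := by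
  unfold signedIntegral
  rcases le_or_gt 0 α with ha | ha
  · rw [if_pos h, if_pos (ha.trans h), if_pos ha, sum_Ico_split ha h g]; abel
  · rcases le_or_gt (0:ℤ) β with hb | hb
    · rw [if_pos h, if_pos hb, if_neg (not_le.2 ha), sum_Ico_split ha.le hb g]; abel
    · rw [if_pos h, if_neg (not_le.2 hb), if_neg (not_le.2 ha), sum_Ico_split h hb.le g]; abel

lemma signedIntegral_eq_sub {G : Type*} [AddCommGroup G] (α β : ℤ) (g : ℤ → G) :
    signedIntegral α β g = signedIntegral 0 β g - signedIntegral 0 α g := by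
  rcases le_or_gt α β with h | h
  · exact signedIntegral_eq_sub_aux h g
  · rw [signedIntegral_symm, signedIntegral_eq_sub_aux h.le g]; abel

lemma signedIntegral_sub {G : Type*} [AddCommGroup G] (α β : ℤ) (g h : ℤ → G) :
    signedIntegral α β (fun t => g t - h t) = signedIntegral α β g - signedIntegral α β h := by
  unfold signedIntegral
  split <;> simp [Finset.sum_sub_distrib] <;> abel

lemma signedIntegral_translate {G : Type*} [AddCommGroup G] (α β : ℤ) (g : ℤ → G) :
    signedIntegral 0 (β - α) (fun t => g (α + t)) = signedIntegral α β g := by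
  unfold signedIntegral
  have key : ∀ u v : ℤ, ∑ t ∈ Finset.Ico (u - α) (v - α), g (α + t) = ∑ t ∈ Finset.Ico u v, g t := by
    intro u v
    have huv : Finset.Ico u v = Finset.map (addLeftEmbedding α) (Finset.Ico (u - α) (v - α)) := by
      rw [Finset.map_add_left_Ico]; congr 1 <;> ring
    rw [huv, Finset.sum_map]
    simp [addLeftEmbedding]
  rcases le_or_gt α β with hc | hc
  · rw [if_pos (by omega : (0:ℤ) ≤ β - α), if_pos hc,
      show (0:ℤ) = α - α by ring, key]
  · rw [if_neg (by omega), if_neg (not_le.2 hc),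
      show (0:ℤ) = α - α by ring, key]

/-- Derivation of a discrete integral with parameters:
if `F(x) = ∫_{a(x)}^{b(x)} f(x,t) dt` then
`F(x+1) - F(x) = ∫_{a(x)}^{b(x)} (f(x+1,t) - f(x,t)) dt
  + ∫_0^{a(x)-a(x+1)} f(x+1, a(x+1)+t) dt + ∫_0^{b(x+1)-b(x)} f(x+1, b(x)+t) dt`. -/
theorem discrete_deriv_integral_params {G : Type*} [AddCommGroup G]
    (f : ℤ → ℤ → G) (a b : ℤ → ℤ) (F : ℤ → G)
    (hF : ∀ x, F x = signedIntegral (a x) (b x) (fun t => f x t)) :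
    ∀ x, F (x + 1) - F x
      = signedIntegral (a x) (b x) (fun t => f (x + 1) t - f x t)
      + signedIntegral 0 (a x - a (x + 1)) (fun t => f (x + 1) (a (x + 1) + t))
      + signedIntegral 0 (b (x + 1) - b x) (fun t => f (x + 1) (b x + t)) := by
  intro x
  rw [hF, hF, signedIntegral_sub, signedIntegral_translate, signedIntegral_translate,
    signedIntegral_eq_sub (a (x+1)) (a x), signedIntegral_eq_sub (b x) (b (x+1)),
    signedIntegral_eq_sub (a (x+1)) (b (x+1)), signedIntegral_eq_sub (a x) (b x) (f (x+1)),
    signedIntegral_eq_sub (a x) (b x)]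
  abel
end

section
/- Change of variables for length ODEs: let V be a real vector space (e.g. ℝ^d), h : V → ℕ → V, and let ℓ : ℕ → ℕ be the binary length with the convention ℓ(0) = 1 and ℓ(x) = ⌊log₂ x⌋ + 1 for x ≥ 1. Suppose f : ℕ → V satisfies the length ODE f(x+1) = f(x) + (ℓ(x+1) − ℓ(x)) • h(f(x), x) for all x, and suppose F : ℕ → V satisfies F(1) = f(0) and F(t+1) = F(t) + h(F(t), 2^t − 1) for all t ≥ 1. Then f(x) = F(ℓ(x)) for every x ∈ ℕ. -/
/-!
Between consecutive arguments the binary length either stays put or, exactly when `x + 1 = 2 ^ ℓ(x)`,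
increases by one. So the length ODE moves `f` only at those points, and there it performs the step
`F(t + 1) = F(t) + h(F(t), 2 ^ t - 1)` with `t = ℓ(x)`; by induction on `x`, `f` is `F ∘ ℓ`.
-/

theorem Nat.log_succ_eq_or {b : ℕ} (hb : 1 < b) (n : ℕ) :
    Nat.log b (n + 1) = Nat.log b n ∨
      n + 1 = b ^ (Nat.log b n + 1) ∧ Nat.log b (n + 1) = Nat.log b n + 1 := by
  have hle : n + 1 ≤ b ^ (Nat.log b n + 1) := Nat.lt_pow_succ_log_self hb n
  rcases hle.lt_or_eq with hlt | hpow
  · exact Or.inl <| le_antisymm (Nat.lt_succ_iff.mp (Nat.log_lt_of_lt_pow n.succ_ne_zero hlt))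
      (Nat.log_mono_right n.le_succ)
  · exact Or.inr ⟨hpow, by rw [hpow, Nat.log_pow hb]⟩

theorem eq_comp_of_length_ode {V : Type*} [AddMonoid V] (ℓ : ℕ → ℕ) (h : V → ℕ → V) (f F : ℕ → V)
    (hf : ∀ x, f (x + 1) = f x + (ℓ (x + 1) - ℓ x) • h (f x) x)
    (hℓ : ∀ x, ℓ (x + 1) = ℓ x ∨ ℓ (x + 1) = ℓ x + 1)
    (hF0 : F (ℓ 0) = f 0)
    (hF : ∀ x, ℓ (x + 1) = ℓ x + 1 → F (ℓ x + 1) = F (ℓ x) + h (F (ℓ x)) x) :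
    ∀ x, f x = F (ℓ x) := by
  intro x
  induction x with
  | zero => exact hF0.symm
  | succ x ih =>
    rcases hℓ x with hstay | hjump
    · rw [hf, hstay, Nat.sub_self, zero_smul, add_zero, ih]
    · rw [hf, hjump, Nat.add_sub_cancel_left, one_smul, ih, hF x hjump]

theorem binary_length_succ_eq_or {L : ℕ → ℕ} (hL0 : L 0 = 1)
    (hL : ∀ x, 1 ≤ x → L x = Nat.log 2 x + 1) (x : ℕ) :
    L (x + 1) = L x ∨ x + 1 = 2 ^ L x ∧ L (x + 1) = L x + 1 := by
  rcases Nat.eq_zero_or_pos x with rfl | hx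
  · left
    rw [hL0, hL 1 le_rfl, Nat.log_one_right]
  · rw [hL x hx, hL (x + 1) (by omega)]
    rcases Nat.log_succ_eq_or one_lt_two x with hstay | ⟨hpow, hjump⟩
    · exact Or.inl (by rw [hstay])
    · exact Or.inr ⟨hpow, by rw [hjump]⟩

theorem length_ode_change_of_variables_general {V : Type*} [AddCommGroup V]
    (h : V → ℕ → V) (L : ℕ → ℕ)
    (hL0 : L 0 = 1) (hL : ∀ x, 1 ≤ x → L x = Nat.log 2 x + 1)
    (f F : ℕ → V)
    (hf : ∀ x, f (x + 1) = f x + (L (x + 1) - L x) • h (f x) x)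
    (hF1 : F 1 = f 0)
    (hF : ∀ t, 1 ≤ t → F (t + 1) = F t + h (F t) (2 ^ t - 1)) :
    ∀ x, f x = F (L x) := by
  have hstep := binary_length_succ_eq_or hL0 hL
  have hL_pos : ∀ x, 1 ≤ L x := fun x => by
    rcases Nat.eq_zero_or_pos x with rfl | hx
    · exact hL0.ge
    · exact (hL x hx).ge.trans' le_add_self
  refine eq_comp_of_length_ode L h f F hf (fun x => (hstep x).imp_right And.right)
    (by rw [hL0, hF1]) fun x hjump => ?_
  obtain ⟨hpow, -⟩ := (hstep x).resolve_left (by omega)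
  rw [hF _ (hL_pos x), ← hpow, Nat.add_sub_cancel]

/-- Change of variables for length ODEs: let `L` be the binary length function with
`L 0 = 1` and `L x = ⌊log₂ x⌋ + 1` for `x ≥ 1`. If `f` satisfies the length ODE
`f(x+1) = f(x) + (L(x+1) - L(x)) • h(f(x), x)` and `F` satisfies `F(1) = f(0)` and
`F(t+1) = F(t) + h(F(t), 2^t - 1)` for `t ≥ 1`, then `f(x) = F(L(x))` for all `x`. -/
theorem length_ode_change_of_variables {V : Type*} [AddCommGroup V] [Module ℝ V]
    (h : V → ℕ → V) (L : ℕ → ℕ)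
    (hL0 : L 0 = 1) (hL : ∀ x, 1 ≤ x → L x = Nat.log 2 x + 1)
    (f F : ℕ → V)
    (hf : ∀ x, f (x + 1) = f x + (L (x + 1) - L x) • h (f x) x)
    (hF1 : F 1 = f 0)
    (hF : ∀ t, 1 ≤ t → F (t + 1) = F t + h (F t) (2 ^ t - 1)) :
    ∀ x, f x = F (L x) :=
  length_ode_change_of_variables_general h L hL0 hL f F hf hF1 hF
end
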